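/- arXiv:1505.05840 — 3 statements merged into one kernel-verified Lean document; each statement's English description precedes it below -/
import Mathlib

section
/- One step of two-sided Jacobi's method does not increase the off-diagonal Frobenius norm: if J is the Jacobi rotation in the (j,k) plane chosen to zero out entries (j,k) and (k,j) of symmetric A, then off(JᵀAJ)² = off(A)² − 2A(j,k)², where off(M)² denotes the sum of squares of the off-diagonal entries of M. -/
/-!
A Givens rotation acting on the right mixes only columns `j` and `k`, by a rotation of the plane,
so it preserves the sum of squares of every row; acting on the left it likewise preserves the
column sums of squares. Hence `JᵀAJ` has the same sum of squares of all entries as `A`, and it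
suffices to track the diagonal. Outside `j, k` the diagonal is unchanged, while on the `2 × 2`
block the squared Frobenius norm `a² + d² + 2b²` of the symmetric block is invariant; as the new
`b` vanishes, the weight `2b²` moves from the off-diagonal part onto the diagonal.
-/

open Matrix

variable {ι R : Type*} [Fintype ι]

theorem Fintype.sum_sub_sum_of_eq_off_pair [AddCommGroup R] {f g : ι → R} {j k : ι}
    (hjk : j ≠ k) (h : ∀ q, q ≠ j → q ≠ k → f q = g q) :
    ∑ q, f q - ∑ q, g q = (f j - g j) + (f k - g k) := by
  rw [← Finset.sum_sub_distrib]
  exact Fintype.sum_eq_add j k hjk fun q hq => sub_eq_zero.2 (h q hq.1 hq.2)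

def sumSqEntries [CommRing R] (M : Matrix ι ι R) : R := ∑ p, ∑ q, M p q ^ 2

theorem sumSqEntries_transpose [CommRing R] (M : Matrix ι ι R) :
    sumSqEntries Mᵀ = sumSqEntries M :=
  Finset.sum_comm

theorem transpose_mul_apply_swap [CommRing R] (G M : Matrix ι ι R) (p q : ι) :
    (Gᵀ * M) p q = (Mᵀ * G) q p := by
  rw [← transpose_apply (Mᵀ * G), transpose_mul, transpose_transpose]

variable [DecidableEq ι]

theorem sum_sum_ite_ne_eq_sub_diag [AddCommGroup R] (f : ι → ι → R) :
    (∑ p, ∑ q, if p ≠ q then f p q else 0) = ∑ p, ∑ q, f p q - ∑ p, f p p := by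
  rw [← Finset.sum_sub_distrib]
  refine Finset.sum_congr rfl fun p _ => ?_
  simp [Finset.sum_ite, Finset.filter_ne]

def givensRotation [Ring R] (j k : ι) (c s : R) : Matrix ι ι R :=
  of fun p q =>
    if p = j ∧ q = j then c else if p = k ∧ q = k then c
    else if p = j ∧ q = k then s else if p = k ∧ q = j then -s
    else if p = q then 1 else 0

section Givens

variable [CommRing R] {j k : ι} (c s : R) (M : Matrix ι ι R)

theorem mul_givensRotation_apply_left (hjk : j ≠ k) (p : ι) :
    (M * givensRotation j k c s) p j = c * M p j - s * M p k := by
  rw [mul_apply, Fintype.sum_eq_add j k hjk]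
  · simp only [givensRotation, of_apply, and_self, ↓reduceIte, hjk.symm, and_true, hjk, and_false,
      mul_neg]
    ring
  · rintro q ⟨hj, hk⟩
    simp [givensRotation, hj, hk]

theorem mul_givensRotation_apply_right (hjk : j ≠ k) (p : ι) :
    (M * givensRotation j k c s) p k = s * M p j + c * M p k := by
  rw [mul_apply, Fintype.sum_eq_add j k hjk]
  · simp only [givensRotation, of_apply, hjk.symm, and_false, ↓reduceIte, hjk, and_true, and_self]
    ring
  · rintro q ⟨hj, hk⟩
    simp [givensRotation, hj, hk]

theorem mul_givensRotation_apply_of_ne {p q : ι} (hj : q ≠ j) (hk : q ≠ k) :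
    (M * givensRotation j k c s) p q = M p q := by
  rw [mul_apply, Fintype.sum_eq_single q]
  · simp [givensRotation, hj, hk]
  · intro b hb
    simp [givensRotation, hj, hk, hb]

theorem sumSqEntries_mul_givensRotation (hjk : j ≠ k) (hcs : c ^ 2 + s ^ 2 = 1) :
    sumSqEntries (M * givensRotation j k c s) = sumSqEntries M := by
  refine Finset.sum_congr rfl fun p _ => sub_eq_zero.1 ?_
  rw [Fintype.sum_sub_sum_of_eq_off_pair hjk fun q hj hk => by
    rw [mul_givensRotation_apply_of_ne c s M hj hk]]
  rw [mul_givensRotation_apply_left c s M hjk, mul_givensRotation_apply_right c s M hjk]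
  linear_combination (M p j ^ 2 + M p k ^ 2) * hcs

theorem sumSqEntries_conj_givensRotation (hjk : j ≠ k) (hcs : c ^ 2 + s ^ 2 = 1) :
    sumSqEntries ((givensRotation j k c s)ᵀ * M * givensRotation j k c s) = sumSqEntries M := by
  have hconj : (givensRotation j k c s)ᵀ * M * givensRotation j k c s =
      ((M * givensRotation j k c s)ᵀ * givensRotation j k c s)ᵀ := by
    rw [transpose_mul, transpose_transpose, mul_assoc]
  rw [hconj, sumSqEntries_transpose,
    sumSqEntries_mul_givensRotation c s _ hjk hcs, sumSqEntries_transpose,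
    sumSqEntries_mul_givensRotation c s _ hjk hcs]

theorem conj_givensRotation_apply_of_ne {p q : ι} (hpj : p ≠ j) (hpk : p ≠ k) (hqj : q ≠ j)
    (hqk : q ≠ k) : ((givensRotation j k c s)ᵀ * M * givensRotation j k c s) p q = M p q := by
  rw [mul_assoc, transpose_mul_apply_swap, mul_givensRotation_apply_of_ne c s _ hpj hpk,
    transpose_apply, mul_givensRotation_apply_of_ne c s _ hqj hqk]

theorem conj_givensRotation_pair_sq (hjk : j ≠ k) (hcs : c ^ 2 + s ^ 2 = 1)
    (hM : M k j = M j k) :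
    ((givensRotation j k c s)ᵀ * M * givensRotation j k c s) j j ^ 2 +
        ((givensRotation j k c s)ᵀ * M * givensRotation j k c s) k k ^ 2 +
        2 * ((givensRotation j k c s)ᵀ * M * givensRotation j k c s) j k ^ 2 =
      M j j ^ 2 + M k k ^ 2 + 2 * M j k ^ 2 := by
  simp only [transpose_mul_apply_swap, mul_givensRotation_apply_left c s _ hjk,
    mul_givensRotation_apply_right c s _ hjk, transpose_apply, hM]
  linear_combination (c ^ 2 + s ^ 2 + 1) * (M j j ^ 2 + M k k ^ 2 + 2 * M j k ^ 2) * hcs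

theorem sum_diag_sq_conj_givensRotation (hjk : j ≠ k) (hcs : c ^ 2 + s ^ 2 = 1)
    (hM : M k j = M j k) :
    ∑ p, ((givensRotation j k c s)ᵀ * M * givensRotation j k c s) p p ^ 2 +
        2 * ((givensRotation j k c s)ᵀ * M * givensRotation j k c s) j k ^ 2 =
      ∑ p, M p p ^ 2 + 2 * M j k ^ 2 := by
  have hdiag := Fintype.sum_sub_sum_of_eq_off_pair hjk
    (f := fun p => ((givensRotation j k c s)ᵀ * M * givensRotation j k c s) p p ^ 2)
    (g := fun p => M p p ^ 2) fun p hpj hpk => by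
      rw [conj_givensRotation_apply_of_ne c s M hpj hpk hpj hpk]
  linear_combination hdiag + conj_givensRotation_pair_sq c s M hjk hcs hM

end Givens

/-- One two-sided Jacobi step: if the rotation `J` in the `(j,k)` plane zeroes the
`(j,k)` entry of symmetric `A`, then `off(JᵀAJ)² = off(A)² − 2·A(j,k)²`. -/
theorem jacobi_step_off_norm {n : ℕ} (A : Matrix (Fin n) (Fin n) ℝ) (hA : Aᵀ = A)
    (j k : Fin n) (hjk : j ≠ k) (c s : ℝ) (hcs : c ^ 2 + s ^ 2 = 1)
    (J : Matrix (Fin n) (Fin n) ℝ)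
    (hJ : ∀ p q, J p q =
      if p = j ∧ q = j then c else if p = k ∧ q = k then c
      else if p = j ∧ q = k then s else if p = k ∧ q = j then -s
      else if p = q then 1 else 0)
    (hzero : (Jᵀ * A * J) j k = 0) :
    (∑ p : Fin n, ∑ q : Fin n, if p ≠ q then ((Jᵀ * A * J) p q) ^ 2 else 0) =
      (∑ p : Fin n, ∑ q : Fin n, if p ≠ q then (A p q) ^ 2 else 0) - 2 * (A j k) ^ 2 := by
  obtain rfl : J = givensRotation j k c s := ext hJ
  have htotal := sumSqEntries_conj_givensRotation c s A hjk hcs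
  have hdiag := sum_diag_sq_conj_givensRotation c s A hjk hcs (congrFun (congrFun hA j) k)
  rw [hzero] at hdiag
  unfold sumSqEntries at htotal
  rw [sum_sum_ite_ne_eq_sub_diag, sum_sum_ite_ne_eq_sub_diag]
  linear_combination htotal - hdiag
end

section
/- Secular equation characterization: if λ is not equal to any diagonal entry dᵢ of D, then λ is an eigenvalue of D + ρuuᵀ if and only if f(λ) = 1 + ρ·Σᵢ uᵢ²/(dᵢ − λ) = 0. -/
/-!
For `λ` off the diagonal of `D`, the eigen-equation `(D + u wᵀ) v = λ v` reads
`v = (wᵀv) (λ - D)⁻¹ u`. So every eigenvector is a nonzero multiple of the resolvent vector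
`x = (λ - D)⁻¹ u`, and `x` is one exactly when `wᵀx = 1`. Taking `ρu` and `u` for `u` and `w`,
`wᵀx = 1` is the secular equation.
-/

open Matrix

namespace Matrix

variable {ι : Type*} [Fintype ι] [DecidableEq ι]

theorem diagonal_add_vecMulVec_mulVec {R : Type*} [CommSemiring R] (d u w v : ι → R) :
    (diagonal d + vecMulVec u w) *ᵥ v = d * v + (w ⬝ᵥ v) • u := by
  ext i
  simp [add_mulVec, mulVec_diagonal, vecMulVec_mulVec]

variable {K : Type*} [Field K] {d u w : ι → K} {lam : K}

theorem diagonal_add_vecMulVec_mulVec_eq_smul_iff (hlam : ∀ i, lam ≠ d i) {v : ι → K} :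
    (diagonal d + vecMulVec u w) *ᵥ v = lam • v ↔
      v = (w ⬝ᵥ v) • fun i ↦ u i / (lam - d i) := by
  rw [diagonal_add_vecMulVec_mulVec, funext_iff, funext_iff]
  refine forall_congr' fun i ↦ ?_
  simp only [Pi.add_apply, Pi.mul_apply, Pi.smul_apply, smul_eq_mul, mul_div_assoc']
  rw [eq_div_iff (sub_ne_zero.2 (hlam i))]
  constructor <;> intro h <;> linear_combination -h

theorem exists_eigenvector_diagonal_add_vecMulVec_iff (hlam : ∀ i, lam ≠ d i) :
    (∃ v ≠ 0, (diagonal d + vecMulVec u w) *ᵥ v = lam • v) ↔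
      w ⬝ᵥ (fun i ↦ u i / (lam - d i)) = 1 := by
  set x : ι → K := fun i ↦ u i / (lam - d i)
  simp only [diagonal_add_vecMulVec_mulVec_eq_smul_iff hlam]
  constructor
  · rintro ⟨v, hv, hvx⟩
    have hc : w ⬝ᵥ v ≠ 0 := fun hc ↦ hv (by rw [hvx, hc, zero_smul])
    have : w ⬝ᵥ v = w ⬝ᵥ v * w ⬝ᵥ x := by
      conv_lhs => rw [hvx]
      rw [dotProduct_smul, smul_eq_mul]
    exact (mul_eq_left₀ hc).1 this.symm
  · intro hx
    refine ⟨x, fun hx0 ↦ ?_, by rw [hx, one_smul]⟩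
    rw [hx0, dotProduct_zero] at hx
    exact zero_ne_one hx

end Matrix

theorem secular_equation_general {n : ℕ} (d u : Fin n → ℝ) (ρ : ℝ)
    (lam : ℝ) (hlam : ∀ i, lam ≠ d i) :
    (∃ v : Fin n → ℝ, v ≠ 0 ∧
      (Matrix.diagonal d + ρ • Matrix.vecMulVec u u).mulVec v = lam • v) ↔
    1 + ρ * ∑ i, (u i) ^ 2 / (d i - lam) = 0 := by
  have hsum : u ⬝ᵥ (fun i ↦ (ρ • u) i / (lam - d i)) = -(ρ * ∑ i, u i ^ 2 / (d i - lam)) := by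
    rw [dotProduct, Finset.mul_sum, ← Finset.sum_neg_distrib]
    refine Finset.sum_congr rfl fun i _ ↦ ?_
    rw [Pi.smul_apply, smul_eq_mul, ← neg_sub, div_neg]
    ring
  rw [← smul_vecMulVec, exists_eigenvector_diagonal_add_vecMulVec_iff hlam, hsum]
  constructor <;> intro h <;> linarith

/-- Secular equation characterization: for `λ` distinct from all `dᵢ` and `ρ ≠ 0`,
`λ` is an eigenvalue of `D + ρuuᵀ` iff `1 + ρ·Σᵢ uᵢ²/(dᵢ − λ) = 0`. -/
theorem secular_equation {n : ℕ} (d u : Fin n → ℝ) (ρ : ℝ) (hρ : ρ ≠ 0)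
    (lam : ℝ) (hlam : ∀ i, lam ≠ d i) :
    (∃ v : Fin n → ℝ, v ≠ 0 ∧
      (Matrix.diagonal d + ρ • Matrix.vecMulVec u u).mulVec v = lam • v) ↔
    1 + ρ * ∑ i, (u i) ^ 2 / (d i - lam) = 0 :=
  secular_equation_general d u ρ lam hlam
end

section
/- Interlacing for rank-one update, ρ < 0: if d₁ < d₂ < ... < dₙ and all uᵢ ≠ 0 and ρ < 0, then the eigenvalues λ₁ ≤ ... ≤ λₙ of D + ρuuᵀ satisfy λ₁ < d₁ < λ₂ < d₂ < ... < λₙ < dₙ. -/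
/-!
Evaluating the characteristic polynomial of `A = D + ρ u uᵀ` at `d k`, the rank-one structure
gives `det (d k • 1 - A) = -ρ (u k)² ∏_{j ≠ k} (d k - d j)`, which is nonzero with the sign of
`(-1) ^ (n - 1 - k)`. Comparing with `∏ i (d k - λ i)`, the number of eigenvalues above `d k`
has the parity of `n - 1 - k`. This number is antitone in `k`, at most `n`, and changes parity
at every step, so it drops by exactly one each time and equals `n - 1 - k`: this is the
interlacing.
-/

open Matrix Polynomial Finset

namespace Matrix

variable {n R : Type*} [Fintype n] [DecidableEq n] [CommRing R]

theorem det_updateRow_diagonal (v x : n → R) (k : n) :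
    ((diagonal v).updateRow k x).det = (∏ j ∈ univ.erase k, v j) * x k := by
  rw [← cramer_transpose_apply, diagonal_transpose, cramer_eq_adjugate_mulVec,
    adjugate_diagonal, mulVec_diagonal]

theorem det_diagonal_add_vecMulVec_of_eq_zero {v : n → R} {k : n} (hk : v k = 0) (a b : n → R) :
    (diagonal v + vecMulVec a b).det = a k * b k * ∏ j ∈ univ.erase k, v j := by
  set M := diagonal v + vecMulVec a b
  have hrow : M k = a k • b := by
    ext j
    simp [M, diagonal_apply, vecMulVec_apply, hk]
  -- subtracting `a i` times the new row `k` from each row `i ≠ k` removes the rank-one part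
  have hclear : (M.updateRow k b).det = ((diagonal v).updateRow k b).det := by
    refine det_eq_of_forall_row_eq_smul_add_const (Function.update a k 0) k (by simp) fun i j => ?_
    rcases eq_or_ne i k with rfl | hik
    · simp
    · simp [M, hik, vecMulVec_apply]
  calc M.det = (M.updateRow k (a k • b)).det := by rw [← hrow, updateRow_eq_self]
    _ = a k * b k * ∏ j ∈ univ.erase k, v j := by
      rw [det_updateRow_smul, hclear, det_updateRow_diagonal]; ring

theorem eval_charpoly_diagonal_add_vecMulVec (d a b : n → R) (k : n) :
    (diagonal d + vecMulVec a b).charpoly.eval (d k) =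
      -(a k * b k) * ∏ j ∈ univ.erase k, (d k - d j) := by
  have h : scalar n (d k) - (diagonal d + vecMulVec a b) =
      diagonal (fun j => d k - d j) + vecMulVec (-a) b := by
    ext i j
    rcases eq_or_ne i j with rfl | hij
    · simp [vecMulVec_apply]
      ring
    · simp [vecMulVec_apply, hij]
  rw [eval_charpoly, h, det_diagonal_add_vecMulVec_of_eq_zero (sub_self _)]
  simp

end Matrix

section Sign

variable {ι κ R : Type*} [CommRing R] [LinearOrder R] [IsStrictOrderedRing R]

theorem Finset.prod_eq_neg_one_pow_card_filter_neg_mul_prod_abs (s : Finset ι) (f : ι → R) :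
    ∏ i ∈ s, f i = (-1) ^ #{i ∈ s | f i < 0} * ∏ i ∈ s, |f i| := by
  rw [← prod_filter_mul_prod_filter_not s (fun i => f i < 0),
    ← prod_filter_mul_prod_filter_not s (fun i => f i < 0) (f := fun i => |f i|), ← mul_assoc,
    ← prod_neg]
  congr 1
  · exact prod_congr rfl fun i hi => by rw [abs_of_neg (mem_filter.1 hi).2, neg_neg]
  · exact prod_congr rfl fun i hi => (abs_of_nonneg (not_lt.1 (mem_filter.1 hi).2)).symm

theorem Finset.card_filter_neg_mod_two_eq_of_prod_eq {s : Finset ι} {t : Finset κ}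
    {f : ι → R} {g : κ → R} {c : R} (hc : 0 < c) (hf : ∀ i ∈ s, f i ≠ 0)
    (hg : ∀ j ∈ t, g j ≠ 0) (h : ∏ i ∈ s, f i = c * ∏ j ∈ t, g j) :
    #{i ∈ s | f i < 0} % 2 = #{j ∈ t | g j < 0} % 2 := by
  have hfpos : 0 < ∏ i ∈ s, |f i| := prod_pos fun i hi => abs_pos.2 (hf i hi)
  have hgpos : 0 < c * ∏ j ∈ t, |g j| := mul_pos hc (prod_pos fun j hj => abs_pos.2 (hg j hj))
  rw [prod_eq_neg_one_pow_card_filter_neg_mul_prod_abs s,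
    prod_eq_neg_one_pow_card_filter_neg_mul_prod_abs t, mul_left_comm] at h
  rw [neg_one_pow_eq_pow_mod_two, neg_one_pow_eq_pow_mod_two (n := #{j ∈ t | g j < 0})] at h
  rcases Nat.mod_two_eq_zero_or_one #{i ∈ s | f i < 0} with ha | ha <;>
  rcases Nat.mod_two_eq_zero_or_one #{j ∈ t | g j < 0} with hb | hb <;>
  simp only [ha, hb, pow_zero, pow_one, one_mul, neg_one_mul] at h ⊢ <;>
  linarith

end Sign

theorem Fin.val_add_eq_of_antitone_of_mod_two {n : ℕ} {m : Fin n → ℕ} (hm : Antitone m)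
    (hle : ∀ k, m k ≤ n) (hpar : ∀ k : Fin n, m k % 2 = (n - 1 - k) % 2) (k : Fin n) :
    m k + k = n - 1 := by
  cases n with
  | zero => exact k.elim0
  | succ N =>
    -- consecutive values have different parities, so `m` drops by at least one at each step
    have hstep : Antitone fun i : Fin (N + 1) => m i + i := by
      refine Fin.antitone_iff_succ_le.2 fun i => ?_
      have := hm (Fin.castSucc_le_succ i)
      have := hpar i.succ
      have := hpar i.castSucc
      simp only [Fin.val_succ, Fin.val_castSucc] at *
      omega
    have := hstep (Fin.zero_le k)
    have := hstep (Fin.le_last k)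
    have := hpar 0
    have := hle 0
    simp only [Fin.val_zero, Fin.val_last] at *
    omega

section Threshold

variable {n : ℕ} {α : Type*} [LinearOrder α] {f : Fin n → α} {c : α} {k : Fin n}

theorem Monotone.apply_le_of_card_filter_lt (hf : Monotone f) (h : #{i | c < f i} < n - k) :
    f k ≤ c := by
  by_contra! hc
  have : Ici k ⊆ ({i | c < f i} : Finset (Fin n)) := fun i hi =>
    mem_filter.2 ⟨mem_univ i, hc.trans_le (hf (mem_Ici.1 hi))⟩
  have := card_le_card this
  rw [Fin.card_Ici] at this
  omega

theorem Monotone.lt_apply_of_lt_card_filter (hf : Monotone f) (h : n - 1 - k < #{i | c < f i}) :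
    c < f k := by
  by_contra! hc
  have : ({i | c < f i} : Finset (Fin n)) ⊆ Ioi k := fun i hi =>
    mem_Ioi.2 (lt_of_not_ge fun hik => (mem_filter.1 hi).2.not_ge ((hf hik).trans hc))
  have := card_le_card this
  rw [Fin.card_Ioi] at this
  omega

end Threshold

section RankOneUpdate

variable {n : ℕ} {d u lam : Fin n → ℝ} {ρ : ℝ}

theorem prod_diag_sub_eq_of_charpoly_eq
    (hchar : (diagonal d + ρ • vecMulVec u u).charpoly = ∏ i, (X - C (lam i))) (k : Fin n) :
    ∏ i, (d k - lam i) = -(ρ * u k * u k) * ∏ j ∈ univ.erase k, (d k - d j) := by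
  have h := eval_charpoly_diagonal_add_vecMulVec d (ρ • u) u k
  rw [smul_vecMulVec, hchar, eval_prod] at h
  simpa only [eval_sub, eval_X, eval_C, Pi.smul_apply, smul_eq_mul] using h

theorem diag_sub_diag_ne_zero (hd : Function.Injective d) (k : Fin n) :
    ∀ j ∈ univ.erase k, d k - d j ≠ 0 := fun _ hj =>
  sub_ne_zero.2 (hd.ne (ne_of_mem_erase hj).symm)

theorem diag_sub_ne_zero_of_charpoly_eq (hd : Function.Injective d) (hu : ∀ i, u i ≠ 0) (hρ : ρ < 0)
    (hchar : (diagonal d + ρ • vecMulVec u u).charpoly = ∏ i, (X - C (lam i))) (k i : Fin n) :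
    d k - lam i ≠ 0 := by
  have hc : -(ρ * u k * u k) ≠ 0 := by simp [hρ.ne, hu k]
  have hprod : ∏ i, (d k - lam i) ≠ 0 := by
    rw [prod_diag_sub_eq_of_charpoly_eq hchar]
    exact mul_ne_zero hc (prod_ne_zero_iff.2 (diag_sub_diag_ne_zero hd k))
  exact prod_ne_zero_iff.1 hprod i (mem_univ i)

theorem card_lt_apply_mod_two_of_charpoly_eq (hd : StrictMono d) (hu : ∀ i, u i ≠ 0)
    (hρ : ρ < 0) (hchar : (diagonal d + ρ • vecMulVec u u).charpoly = ∏ i, (X - C (lam i)))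
    (k : Fin n) : #{i | d k < lam i} % 2 = (n - 1 - k) % 2 := by
  have hc : 0 < -(ρ * u k * u k) := by nlinarith [mul_self_pos.2 (hu k)]
  have h := card_filter_neg_mod_two_eq_of_prod_eq hc
    (fun i _ => diag_sub_ne_zero_of_charpoly_eq hd.injective hu hρ hchar k i)
    (diag_sub_diag_ne_zero hd.injective k)
    (prod_diag_sub_eq_of_charpoly_eq hchar k)
  have hIoi : ({j ∈ univ.erase k | d k < d j} : Finset (Fin n)) = Ioi k := by
    ext j
    simpa [hd.lt_iff_lt] using fun h => h.ne'
  simpa only [sub_neg, hIoi, Fin.card_Ioi] using h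

end RankOneUpdate

/-- Interlacing for a negative rank-one update: if `d₁ < ... < dₙ`, all `uᵢ ≠ 0` and
`ρ < 0`, the eigenvalues `λ₁ ≤ ... ≤ λₙ` of `D + ρuuᵀ` satisfy
`λ₁ < d₁ < λ₂ < d₂ < ... < λₙ < dₙ`. -/
theorem interlacing_rank_one_neg {n : ℕ} (d u : Fin n → ℝ)
    (hd : StrictMono d) (hu : ∀ i, u i ≠ 0) (ρ : ℝ) (hρ : ρ < 0)
    (lam : Fin n → ℝ) (hmono : Monotone lam)
    (hchar : (Matrix.diagonal d + ρ • Matrix.vecMulVec u u).charpoly =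
      ∏ i, (X - C (lam i))) :
    (∀ i, lam i < d i) ∧
    (∀ i j : Fin n, (i : ℕ) + 1 = (j : ℕ) → d i < lam j) := by
  have hanti : Antitone fun k => #{i | d k < lam i} := fun a b hab =>
    card_le_card (monotone_filter_right _ fun i _ h => (hd.monotone hab).trans_lt h)
  have hcount := Fin.val_add_eq_of_antitone_of_mod_two hanti
    (fun k => (card_filter_le _ _).trans_eq (card_fin n))
    (card_lt_apply_mod_two_of_charpoly_eq hd hu hρ hchar)
  refine ⟨fun k => (hmono.apply_le_of_card_filter_lt ?_).lt_of_ne fun h => ?_,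
    fun i j hij => hmono.lt_apply_of_lt_card_filter ?_⟩
  · have := hcount k
    omega
  · exact diag_sub_ne_zero_of_charpoly_eq hd.injective hu hρ hchar k k (by rw [h, sub_self])
  · have := hcount i
    omega
end
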